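/- Let (θ₁, φ₁), (θ₂, φ₂), (θ₃, φ₃) be independent, each uniformly distributed on [0,2π]², and set hᵢ := sin θᵢ·sin φᵢ. Then for every real a and all real s₁, s₂, E[cos(s₁·a·(h₁ − h₃) + s₂·a·(h₂ − h₃))] = J₀(s₁·a/2)² · J₀(s₂·a/2)² · J₀((s₁ + s₂)·a/2)². -/

import Mathlib

open Real MeasureTheory Finset

/-- Bessel function of the first kind of order zero (integral representation). -/
noncomputable def J₀ (x : ℝ) : ℝ :=
  (1 / (2 * π)) * ∫ t in (0:ℝ)..(2 * π), Real.cos (x * Real.sin t)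

/-- Expectation over three independent pairs of angles, each uniform on `[0, 2π]²`. -/
noncomputable def E6 (f : ℝ → ℝ → ℝ → ℝ → ℝ → ℝ → ℝ) : ℝ :=
  (1 / (2 * π) ^ 6) *
    ∫ θ₁ in (0:ℝ)..(2 * π), ∫ φ₁ in (0:ℝ)..(2 * π),
      ∫ θ₂ in (0:ℝ)..(2 * π), ∫ φ₂ in (0:ℝ)..(2 * π),
        ∫ θ₃ in (0:ℝ)..(2 * π), ∫ φ₃ in (0:ℝ)..(2 * π), f θ₁ φ₁ θ₂ φ₂ θ₃ φ₃

/-!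
Integrating out one pair of angles turns `cos (A + c sin θ sin φ)` into
`(2π)² J₀(c/2)² cos A`: the `φ`-integral gives `2π J₀(c sin θ) cos A` (the sine part is
antiperiodic), and `∫ J₀(c sin θ) dθ = 2π J₀(c/2)²` follows from
`c sin θ sin (t + θ) = (c/2) (cos t - cos (2θ + t))`: after substituting `φ = t + θ` and
swapping the integrals, the doubled angle `2θ + t` runs over two full periods.
Applying this to the three pairs in turn gives the product of the three squares.
-/

namespace Function

variable {E : Type*} [NormedAddCommGroup E] [NormedSpace ℝ E] {f : ℝ → E} {T : ℝ}

theorem Periodic.intervalIntegral_comp_add_right (hf : Periodic f T) (d : ℝ) :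
    ∫ x in (0:ℝ)..T, f (x + d) = ∫ x in (0:ℝ)..T, f x := by
  simpa [intervalIntegral.integral_comp_add_right, add_comm] using
    hf.intervalIntegral_add_eq d 0

theorem Periodic.intervalIntegral_comp_mul_add (hf : Periodic f T) (hfc : Continuous f)
    {n : ℤ} (hn : n ≠ 0) (d : ℝ) :
    ∫ x in (0:ℝ)..T, f (n * x + d) = ∫ x in (0:ℝ)..T, f x := by
  have hn' : (n : ℝ) ≠ 0 := Int.cast_ne_zero.mpr hn
  rw [intervalIntegral.integral_comp_mul_add _ hn', mul_zero, zero_add, add_comm,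
    ← zsmul_eq_mul, hf.intervalIntegral_add_zsmul_eq n d (fun _ _ ↦ hfc.intervalIntegrable _ _),
    hf.intervalIntegral_add_eq d 0, zero_add, ← Int.cast_smul_eq_zsmul ℝ, smul_smul,
    inv_mul_cancel₀ hn', one_smul]

theorem Antiperiodic.intervalIntegral_zero_two_mul_eq_zero (hf : Antiperiodic f T)
    (hfc : Continuous f) :
    ∫ x in (0:ℝ)..2 * T, f x = 0 := by
  have hsecond : ∫ x in T..2 * T, f x = -∫ x in (0:ℝ)..T, f x := by
    rw [← intervalIntegral.integral_neg, two_mul]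
    simpa [hf _] using (intervalIntegral.integral_comp_add_right f (a := 0) (b := T) T).symm
  rw [← intervalIntegral.integral_add_adjacent_intervals (hfc.intervalIntegrable 0 T)
    (hfc.intervalIntegrable T _), hsecond, add_neg_cancel]

end Function

theorem intervalIntegral_integral_swap_of_continuous {F : ℝ → ℝ → ℝ}
    (hF : Continuous (Function.uncurry F)) {a b c d : ℝ} (hab : a ≤ b) (hcd : c ≤ d) :
    ∫ x in a..b, ∫ y in c..d, F x y = ∫ y in c..d, ∫ x in a..b, F x y := by
  simp only [intervalIntegral.integral_of_le hab, intervalIntegral.integral_of_le hcd]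
  apply integral_integral_swap
  rw [Measure.prod_restrict]
  exact (hF.continuousOn.integrableOn_compact (isCompact_Icc.prod isCompact_Icc)).mono_set
    (Set.prod_mono Set.Ioc_subset_Icc_self Set.Ioc_subset_Icc_self)

theorem J₀_neg (x : ℝ) : J₀ (-x) = J₀ x := by
  simp only [J₀, neg_mul, cos_neg]

theorem integral_cos_mul_sin (b : ℝ) :
    ∫ t in (0:ℝ)..2 * π, cos (b * sin t) = 2 * π * J₀ b := by
  rw [J₀, ← mul_assoc, mul_one_div_cancel (by positivity), one_mul]

theorem integral_sin_mul_sin (b : ℝ) :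
    ∫ t in (0:ℝ)..2 * π, sin (b * sin t) = 0 :=
  Function.Antiperiodic.intervalIntegral_zero_two_mul_eq_zero (fun t ↦ by simp [sin_add_pi])
    (by fun_prop)

theorem integral_cos_add_mul_sin (A b : ℝ) :
    ∫ t in (0:ℝ)..2 * π, cos (A + b * sin t) = 2 * π * J₀ b * cos A := by
  simp only [cos_add]
  rw [intervalIntegral.integral_sub, intervalIntegral.integral_const_mul,
    intervalIntegral.integral_const_mul, integral_cos_mul_sin, integral_sin_mul_sin]
  · ring
  all_goals exact (by fun_prop : Continuous _).intervalIntegrable _ _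

theorem integral_cos_add_mul_cos (A b : ℝ) :
    ∫ t in (0:ℝ)..2 * π, cos (A + b * cos t) = 2 * π * J₀ b * cos A := by
  have hper : Function.Periodic (fun t ↦ cos (A + b * sin t)) (2 * π) :=
    fun t ↦ by simp [sin_periodic t]
  rw [← integral_cos_add_mul_sin, ← hper.intervalIntegral_comp_add_right (π / 2)]
  simp only [sin_add_pi_div_two]

theorem cos_mul_sin_mul_sin_add_eq (c θ t : ℝ) :
    cos (c * sin θ * sin (t + θ)) =
      cos (c / 2 * cos t + -(c / 2) * cos (2 * θ + t)) := by
  congr 1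
  rw [sin_add, cos_add, cos_two_mul, sin_two_mul]
  linear_combination c * cos t * sin_sq_add_cos_sq θ

theorem integral_J₀_mul_sin (c : ℝ) :
    ∫ θ in (0:ℝ)..2 * π, J₀ (c * sin θ) = 2 * π * J₀ (c / 2) ^ 2 := by
  set z := c / 2
  have hsubst (θ : ℝ) : ∫ φ in (0:ℝ)..2 * π, cos (c * sin θ * sin φ) =
      ∫ t in (0:ℝ)..2 * π, cos (z * cos t + -z * cos (2 * θ + t)) := by
    have hper : Function.Periodic (fun φ ↦ cos (c * sin θ * sin φ)) (2 * π) :=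
      fun φ ↦ by simp [sin_periodic φ]
    rw [← hper.intervalIntegral_comp_add_right θ]
    exact intervalIntegral.integral_congr fun t _ ↦ cos_mul_sin_mul_sin_add_eq c θ t
  have hdilate (t : ℝ) :
      ∫ θ in (0:ℝ)..2 * π, cos (z * cos t + -z * cos (2 * θ + t)) =
        ∫ w in (0:ℝ)..2 * π, cos (z * cos t + -z * cos w) := by
    have hper : Function.Periodic (fun w ↦ cos (z * cos t + -z * cos w)) (2 * π) :=
      fun w ↦ by simp [cos_periodic w]
    simpa using hper.intervalIntegral_comp_mul_add (by fun_prop) (n := 2) two_ne_zero t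
  have h2π : 2 * π ≠ 0 := by positivity
  refine mul_left_cancel₀ h2π ?_
  calc 2 * π * ∫ θ in (0:ℝ)..2 * π, J₀ (c * sin θ)
      = ∫ θ in (0:ℝ)..2 * π, ∫ t in (0:ℝ)..2 * π,
          cos (z * cos t + -z * cos (2 * θ + t)) := by
        simp only [← intervalIntegral.integral_const_mul, ← integral_cos_mul_sin, hsubst]
    _ = ∫ t in (0:ℝ)..2 * π, ∫ θ in (0:ℝ)..2 * π,
          cos (z * cos t + -z * cos (2 * θ + t)) :=
        intervalIntegral_integral_swap_of_continuous (by fun_prop) (by positivity)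
          (by positivity)
    _ = ∫ t in (0:ℝ)..2 * π, 2 * π * J₀ z * cos (0 + z * cos t) := by
        simp only [hdilate, integral_cos_add_mul_cos, J₀_neg, zero_add]
    _ = 2 * π * (2 * π * J₀ z ^ 2) := by
        rw [intervalIntegral.integral_const_mul, integral_cos_add_mul_cos, cos_zero]
        ring

theorem integral_integral_cos_add_mul_sin_mul_sin (A c : ℝ) :
    ∫ θ in (0:ℝ)..2 * π, ∫ φ in (0:ℝ)..2 * π, cos (A + c * (sin θ * sin φ)) =
      (2 * π) ^ 2 * J₀ (c / 2) ^ 2 * cos A := by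
  simp only [← mul_assoc, integral_cos_add_mul_sin, intervalIntegral.integral_mul_const,
    intervalIntegral.integral_const_mul, integral_J₀_mul_sin]
  ring

theorem stmt_7 (a s₁ s₂ : ℝ) :
    E6 (fun θ₁ φ₁ θ₂ φ₂ θ₃ φ₃ =>
      Real.cos (s₁ * a * (Real.sin θ₁ * Real.sin φ₁ - Real.sin θ₃ * Real.sin φ₃) +
        s₂ * a * (Real.sin θ₂ * Real.sin φ₂ - Real.sin θ₃ * Real.sin φ₃)))
    = (J₀ (s₁ * a / 2)) ^ 2 * (J₀ (s₂ * a / 2)) ^ 2 * (J₀ ((s₁ + s₂) * a / 2)) ^ 2 := by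
  -- the `0 +` lets the last pair be integrated out by the same lemma
  have hsplit (h₁ h₂ h₃ : ℝ) :
      s₁ * a * (h₁ - h₃) + s₂ * a * (h₂ - h₃) =
        ((0 + s₁ * a * h₁) + s₂ * a * h₂) + -((s₁ + s₂) * a) * h₃ := by
    ring
  simp only [E6, hsplit, integral_integral_cos_add_mul_sin_mul_sin,
    intervalIntegral.integral_const_mul, neg_div, J₀_neg, cos_zero]
  field_simp
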